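/- Let 1 ≤ W < d and let Φ : ℝ^W → ℝ^d be a C² map with Φ(0) = 0 whose Jacobian J₀ = DΦ(0) has full rank W. Then the set F_Φ of gradient-flow-learnable targets is not dense in ℝ^d: there exist f₀ ∈ ℝ^d and ε > 0 such that no target in the ball B(f₀, ε) is learnable. -/

import Mathlib

/-!
Let `J = DΦ(0)`. On a small closed ball `‖x‖ ≤ r`, `Φ x` is within `‖J x‖ / 4` of `J x`. Since
`W < d` there is `f₀ ≠ 0` orthogonal to the range of `J`; taking `‖f₀‖` of order `r`, the loss
`½‖f₀ - Φ x‖²` is larger on the sphere `‖x‖ = r` than at `0`, and `f₀ ∉ Φ(closedBall 0 r)`.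
By compactness both conditions persist for `f` near `f₀`. The loss decreases along the gradient
flow, so the flow cannot reach the sphere, and the loss stays above
`½ · infDist(f, Φ(closedBall 0 r))² > 0`.
-/

open MeasureTheory Filter Topology Set

/-- The square loss `L_f(w) = (1/2)‖f - Φ(w)‖²`. -/
noncomputable def loss {W d : ℕ} (Φ : EuclideanSpace ℝ (Fin W) → EuclideanSpace ℝ (Fin d))
    (f : EuclideanSpace ℝ (Fin d)) (w : EuclideanSpace ℝ (Fin W)) : ℝ :=
  (1 / 2) * ‖f - Φ w‖ ^ 2

/-- The set of targets learnable by gradient flow started at `0`. -/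
def learnableSet {W d : ℕ} (Φ : EuclideanSpace ℝ (Fin W) → EuclideanSpace ℝ (Fin d)) :
    Set (EuclideanSpace ℝ (Fin d)) :=
  {f | ∃ w : ℝ → EuclideanSpace ℝ (Fin W), w 0 = 0 ∧
    (∀ t ≥ (0 : ℝ), HasDerivAt w (-(gradient (loss Φ f) (w t))) t) ∧
    (⨅ t : Set.Ici (0 : ℝ), loss Φ f (w t)) = 0}

open scoped RealInnerProductSpace NNReal
open Metric

section Geometry

variable {F : Type*} [NormedAddCommGroup F] [InnerProductSpace ℝ F]

theorem exists_ne_zero_forall_inner_eq_zero {E : Type*} [AddCommGroup E] [Module ℝ E]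
    [FiniteDimensional ℝ E] [FiniteDimensional ℝ F] (J : E →ₗ[ℝ] F)
    (h : Module.finrank ℝ E < Module.finrank ℝ F) : ∃ u ≠ 0, ∀ x, ⟪u, J x⟫ = 0 := by
  have hne : (LinearMap.range J)ᗮ ≠ ⊥ := by
    intro hbot
    have hsum := (LinearMap.range J).finrank_add_finrank_orthogonal
    rw [hbot, finrank_bot] at hsum
    have := J.finrank_range_le
    omega
  obtain ⟨u, hu, hu0⟩ := Submodule.exists_mem_ne_zero_of_ne_bot hne
  exact ⟨u, hu0, fun x ↦ (Submodule.mem_orthogonal' _ _).1 hu _ ⟨x, rfl⟩⟩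

theorem ne_of_inner_eq_zero_of_norm_sub_le {f j y : F} (hf : f ≠ 0) (hfj : ⟪f, j⟫ = 0)
    (hy : ‖y - j‖ ≤ ‖j‖ / 4) : y ≠ f := by
  rintro rfl
  have hpyth : ‖y - j‖ ^ 2 = ‖y‖ ^ 2 + ‖j‖ ^ 2 := by
    rw [norm_sub_sq_real, hfj]; ring
  have hsq : ‖y - j‖ ^ 2 ≤ (‖j‖ / 4) ^ 2 := pow_le_pow_left₀ (norm_nonneg _) hy 2
  exact hf (norm_eq_zero.1 (by nlinarith [norm_nonneg y, sq_nonneg ‖j‖]))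

theorem norm_lt_norm_sub_of_inner_eq_zero {f j y : F} (hfj : ⟪f, j⟫ = 0)
    (hy : ‖y - j‖ ≤ ‖j‖ / 4) (hj : 0 < ‖j‖) (hf : ‖f‖ ≤ ‖j‖) : ‖f‖ < ‖f - y‖ := by
  have hy_lower : 3 / 4 * ‖j‖ ≤ ‖y‖ := by
    have := norm_sub_norm_le j y
    rw [norm_sub_rev] at this
    linarith
  have hinner : ⟪f, y⟫ ≤ ‖j‖ ^ 2 / 4 := calc
    ⟪f, y⟫ = ⟪f, y - j⟫ := by rw [inner_sub_right, hfj, sub_zero]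
    _ ≤ ‖f‖ * ‖y - j‖ := real_inner_le_norm _ _
    _ ≤ ‖j‖ * (‖j‖ / 4) := by gcongr
    _ = ‖j‖ ^ 2 / 4 := by ring
  have hsq : ‖f‖ ^ 2 < ‖f - y‖ ^ 2 := by
    rw [norm_sub_sq_real]; nlinarith
  exact lt_of_pow_lt_pow_left₀ 2 (norm_nonneg _) hsq

end Geometry

theorem HasFDerivAt.eventually_norm_sub_le_of_antilipschitz {E F : Type*}
    [NormedAddCommGroup E] [NormedSpace ℝ E] [NormedAddCommGroup F] [NormedSpace ℝ F]
    {Φ : E → F} {J : E →L[ℝ] F} {K : ℝ≥0} (hΦ : HasFDerivAt Φ J 0) (hΦ0 : Φ 0 = 0)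
    (hJ : AntilipschitzWith K J) {η : ℝ} (hη : 0 < η) :
    ∀ᶠ x in 𝓝 0, ‖Φ x - J x‖ ≤ η * ‖J x‖ := by
  have hO : (fun x ↦ x) =O[𝓝 (0 : E)] (fun x ↦ J x) :=
    Asymptotics.IsBigO.of_bound K (Eventually.of_forall fun x ↦ by
      simpa using J.bound_of_antilipschitz hJ x)
  simpa [hΦ0] using ((hasFDerivAt_iff_isLittleO_nhds_zero.1 hΦ).trans_isBigO hO).bound hη

section Trapping

variable {E : Type*} [NormedAddCommGroup E] {F : Type*} [NormedAddCommGroup F]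

-- For such `f`, the sphere of radius `r` is a barrier for the gradient flow of `‖f - Φ ·‖²` from
-- `0`, and `Φ` stays away from `f` inside it.
def trappingTargets (Φ : E → F) (r : ℝ) : Set F :=
  {f | f ∉ Φ '' closedBall 0 r ∧ ∀ x ∈ sphere 0 r, ‖f - Φ 0‖ < ‖f - Φ x‖}

theorem isOpen_trappingTargets [ProperSpace E] {Φ : E → F} (hΦ : Continuous Φ) (r : ℝ) :
    IsOpen (trappingTargets Φ r) := by
  refine ((isCompact_closedBall 0 r).image hΦ).isClosed.isOpen_compl.inter ?_
  refine isOpen_iff_mem_nhds.2 fun f hf ↦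
    (isCompact_sphere 0 r).eventually_forall_of_forall_eventually fun x hx ↦ ?_
  have hopen : IsOpen {p : F × E | ‖p.1 - Φ 0‖ < ‖p.1 - Φ p.2‖} :=
    isOpen_lt (by fun_prop) (by fun_prop)
  exact hopen.mem_nhds (hf x hx)

theorem exists_mem_trappingTargets [NormedSpace ℝ E] [InnerProductSpace ℝ F] {Φ : E → F}
    {J : E →L[ℝ] F} {K : ℝ≥0} (hΦ : HasFDerivAt Φ J 0) (hΦ0 : Φ 0 = 0) (hK : 0 < K)
    (hJ : AntilipschitzWith K J) {u : F} (hu : u ≠ 0) (huJ : ∀ x, ⟪u, J x⟫ = 0) :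
    ∃ r > 0, ∃ f₀, f₀ ∈ trappingTargets Φ r := by
  obtain ⟨δ, hδ, hTaylor⟩ := Metric.eventually_nhds_iff.1
    (hΦ.eventually_norm_sub_le_of_antilipschitz hΦ0 hJ (by norm_num : (0 : ℝ) < 1 / 4))
  set r := δ / 2
  have hr : 0 < r := by positivity
  have hTaylor' : ∀ x ∈ closedBall (0 : E) r, ‖Φ x - J x‖ ≤ ‖J x‖ / 4 := fun x hx ↦ by
    have := hTaylor ((mem_closedBall.1 hx).trans_lt (half_lt_self hδ))
    linarith
  set f₀ : F := (r / K / ‖u‖) • u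
  have hf₀ : ‖f₀‖ = r / K := by
    rw [norm_smul, Real.norm_of_nonneg (by positivity), div_mul_cancel₀ _ (norm_ne_zero_iff.2 hu)]
  have hf₀J : ∀ x, ⟪f₀, J x⟫ = 0 := fun x ↦ by rw [real_inner_smul_left, huJ, mul_zero]
  refine ⟨r, hr, f₀, ?_, fun x hx ↦ ?_⟩
  · rintro ⟨x, hx, hxf⟩
    have hf₀0 : f₀ ≠ 0 := norm_ne_zero_iff.1 (by rw [hf₀]; positivity)
    exact ne_of_inner_eq_zero_of_norm_sub_le hf₀0 (hf₀J x) (hTaylor' x hx) hxf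
  · have hJx : r / K ≤ ‖J x‖ := by
      rw [div_le_iff₀' (by exact_mod_cast hK), ← mem_sphere_zero_iff_norm.1 hx]
      exact J.bound_of_antilipschitz hJ x
    rw [hΦ0, sub_zero]
    exact norm_lt_norm_sub_of_inner_eq_zero (hf₀J x) (hTaylor' x (sphere_subset_closedBall hx))
      (lt_of_lt_of_le (by positivity) hJx) (hf₀ ▸ hJx)

end Trapping

theorem antitoneOn_comp_of_hasDerivAt_neg_gradient {E : Type*} [NormedAddCommGroup E]
    [InnerProductSpace ℝ E] [CompleteSpace E] {L : E → ℝ} (hL : Differentiable ℝ L)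
    {w : ℝ → E} (hw : ∀ t ≥ 0, HasDerivAt w (-gradient L (w t)) t) :
    AntitoneOn (L ∘ w) (Ici 0) := by
  have hLw : ∀ t ≥ 0, HasDerivAt (L ∘ w) (-‖gradient L (w t)‖ ^ 2) t := fun t ht ↦ by
    refine ((hL (w t)).hasGradientAt.hasFDerivAt.comp_hasDerivAt t (hw t ht)).congr_deriv ?_
    rw [InnerProductSpace.toDual_apply_apply, inner_neg_right, real_inner_self_eq_norm_sq]
  refine antitoneOn_of_hasDerivWithinAt_nonpos (f' := fun t ↦ -‖gradient L (w t)‖ ^ 2)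
    (convex_Ici 0) (fun t ht ↦ (hLw t ht).continuousAt.continuousWithinAt) (fun t ht ↦ ?_)
    fun t _ ↦ ?_
  · rw [interior_Ici] at ht ⊢
    exact (hLw t (le_of_lt ht)).hasDerivWithinAt
  · exact neg_nonpos.2 (sq_nonneg _)

theorem mem_ball_of_antitoneOn_of_lt_on_sphere {E : Type*} [PseudoMetricSpace E] {L : E → ℝ}
    {w : ℝ → E} (hw : ContinuousOn w (Ici 0)) (hLw : AntitoneOn (L ∘ w) (Ici 0)) {r : ℝ}
    (hr : 0 ≤ r) (hsphere : ∀ x ∈ sphere (w 0) r, L (w 0) < L x) {t : ℝ} (ht : 0 ≤ t) :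
    w t ∈ ball (w 0) r := by
  by_contra hout
  rw [mem_ball, not_lt] at hout
  have hdist : ContinuousOn (fun s ↦ dist (w s) (w 0)) (Icc 0 t) :=
    fun s hs ↦ (hw.mono Icc_subset_Ici_self s hs).dist continuousWithinAt_const
  obtain ⟨s, hs, hsr⟩ := intermediate_value_Icc ht hdist ⟨by simpa using hr, hout⟩
  exact (hsphere (w s) hsr).not_ge (hLw self_mem_Ici hs.1 hs.1)

theorem notMem_learnableSet_of_mem_trappingTargets {W d : ℕ}
    {Φ : EuclideanSpace ℝ (Fin W) → EuclideanSpace ℝ (Fin d)} (hΦ : Differentiable ℝ Φ) {r : ℝ}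
    (hr : 0 ≤ r) {f : EuclideanSpace ℝ (Fin d)} (hf : f ∈ trappingTargets Φ r) :
    f ∉ learnableSet Φ := by
  rintro ⟨w, hw0, hw, hinf⟩
  obtain ⟨hfar, hsphere⟩ := hf
  have hL : Differentiable ℝ (loss Φ f) := fun x ↦
    (((differentiableAt_const f).sub (hΦ x)).norm_sq ℝ).const_mul _
  have hsphere' : ∀ x ∈ sphere (w 0) r, loss Φ f (w 0) < loss Φ f x := by
    rw [hw0]
    intro x hx
    unfold loss
    gcongr
    exact hsphere x hx
  have htrapped : ∀ t ≥ 0, w t ∈ closedBall 0 r := fun t ht ↦ by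
    rw [← hw0]
    exact ball_subset_closedBall <| mem_ball_of_antitoneOn_of_lt_on_sphere
      (fun s hs ↦ (hw s hs).continuousAt.continuousWithinAt)
      (antitoneOn_comp_of_hasDerivAt_neg_gradient hL hw) hr hsphere' ht
  have hgap : 0 < infDist f (Φ '' closedBall 0 r) :=
    (((isCompact_closedBall 0 r).image hΦ.continuous).isClosed.notMem_iff_infDist_pos
      ⟨Φ 0, mem_image_of_mem Φ (mem_closedBall_self hr)⟩).1 hfar
  have hbound : ∀ t : Ici (0 : ℝ), infDist f (Φ '' closedBall 0 r) ^ 2 / 2 ≤ loss Φ f (w t) :=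
    fun ⟨t, ht⟩ ↦ by
      have := infDist_le_dist_of_mem (x := f) (mem_image_of_mem Φ (htrapped t ht))
      rw [dist_eq_norm] at this
      unfold loss
      nlinarith [infDist_nonneg (x := f) (s := Φ '' closedBall 0 r)]
  have := hinf ▸ le_ciInf hbound
  linarith [pow_pos hgap 2]

theorem learnable_not_dense (W d : ℕ) (hWd : W < d)
    (Φ : EuclideanSpace ℝ (Fin W) → EuclideanSpace ℝ (Fin d))
    (hΦ : ContDiff ℝ 2 Φ) (hΦ0 : Φ 0 = 0)
    (hrank : Function.Injective (fderiv ℝ Φ 0)) :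
    ∃ f₀ : EuclideanSpace ℝ (Fin d), ∃ ε > (0 : ℝ),
      ∀ f ∈ Metric.ball f₀ ε, f ∉ learnableSet Φ := by
  have hΦd : Differentiable ℝ Φ := hΦ.differentiable two_ne_zero
  set J := fderiv ℝ Φ 0
  obtain ⟨K, hK, hJ⟩ := J.toLinearMap.exists_antilipschitzWith (LinearMap.ker_eq_bot.2 hrank)
  obtain ⟨u, hu, huJ⟩ := exists_ne_zero_forall_inner_eq_zero J.toLinearMap
    (by simpa only [finrank_euclideanSpace_fin] using hWd)
  obtain ⟨r, hr, f₀, hf₀⟩ := exists_mem_trappingTargets (hΦd 0).hasFDerivAt hΦ0 hK hJ hu huJ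
  obtain ⟨ε, hε, hball⟩ := Metric.isOpen_iff.1 (isOpen_trappingTargets hΦd.continuous r) f₀ hf₀
  exact ⟨f₀, ε, hε, fun f hf ↦ notMem_learnableSet_of_mem_trappingTargets hΦd hr.le (hball hf)⟩
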